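/- For all natural numbers n and m, ∫_{−1}^{1} L_n(x)·L_m(x) dx equals 2/(2n+1) if n = m and equals 0 if n ≠ m. -/

import Mathlib

/-!
Write `L_n = (2ⁿ n!)⁻¹ Dⁿ Pₙ` with `Pₙ = (X² - 1)ⁿ`. Every derivative of `Pₘ` of order `< m`
vanishes at `±1`, so `m` integrations by parts give
`∫ Dⁿ Pₙ · Dᵐ Pₘ = (-1)ᵐ ∫ Dⁿ⁺ᵐ Pₙ · Pₘ`. If `n < m` this vanishes because `deg Pₙ = 2n`.
If `n = m`, then `D²ⁿ Pₙ = (2n)!` and what is left is `∫₋₁¹ (1 - x²)ⁿ = 2²ⁿ⁺¹ (n!)² / (2n+1)!`,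
which follows from the recurrence `(2n+3) Wₙ₊₁ = (2n+2) Wₙ` for `Wₙ = ∫₋₁¹ (1 - x²)ⁿ`, again an
integration by parts.
-/

noncomputable def legendre (n : ℕ) : ℝ → ℝ :=
  fun x => (1 / ((2 : ℝ) ^ n * (n.factorial : ℝ))) *
    iteratedDeriv n (fun y => (y ^ 2 - 1) ^ n) x

open Polynomial Nat

namespace Polynomial

theorem iteratedDeriv_eval {𝕜 : Type*} [NontriviallyNormedField 𝕜] (p : 𝕜[X]) (k : ℕ) :
    iteratedDeriv k (fun x => p.eval x) = fun x => (derivative^[k] p).eval x := by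
  induction k generalizing p with
  | zero => simp
  | succ k ih =>
    ext x
    rw [iteratedDeriv_succ, ih, Function.iterate_succ_apply', Polynomial.deriv]

theorem eval_iterate_derivative_pow_eq_zero {R : Type*} [CommRing R] {p : R[X]} {x : R}
    (hx : p.IsRoot x) {n i : ℕ} (hi : i < n) : (derivative^[i] (p ^ n)).eval x = 0 := by
  obtain ⟨q, hq⟩ := pow_sub_dvd_iterate_derivative_pow p n i
  rw [hq, eval_mul, eval_pow, hx.eq_zero, zero_pow (Nat.sub_ne_zero_of_lt hi), zero_mul]

theorem Monic.iterate_derivative_natDegree {R : Type*} [Semiring R] {p : R[X]} (hp : p.Monic) :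
    derivative^[p.natDegree] p = C (p.natDegree ! : R) := by
  have hdeg : (derivative^[p.natDegree] p).natDegree = 0 := by
    simpa using natDegree_iterate_derivative p p.natDegree
  rw [eq_C_of_natDegree_eq_zero hdeg, coeff_iterate_derivative, zero_add,
    Nat.descFactorial_self, hp.coeff_natDegree, nsmul_one]

end Polynomial

section IntegrationByParts

variable {a b : ℝ}

theorem integral_eval_mul_eval_derivative (p q : ℝ[X]) (ha : p.eval a = 0) (hb : p.eval b = 0) :
    ∫ x in a..b, p.eval x * (derivative q).eval x =
      -∫ x in a..b, (derivative p).eval x * q.eval x := by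
  rw [intervalIntegral.integral_mul_deriv_eq_deriv_mul (fun x _ => p.hasDerivAt x)
    (fun x _ => q.hasDerivAt x) ((derivative p).continuous.intervalIntegrable _ _)
    ((derivative q).continuous.intervalIntegrable _ _), ha, hb, zero_mul, zero_mul, sub_zero,
    zero_sub]

theorem integral_eval_iterate_derivative_mul_eval (p q : ℝ[X]) (j : ℕ)
    (hq : ∀ i < j, (derivative^[i] q).eval a = 0 ∧ (derivative^[i] q).eval b = 0) :
    ∫ x in a..b, (derivative^[j] p).eval x * q.eval x =
      (-1) ^ j * ∫ x in a..b, p.eval x * (derivative^[j] q).eval x := by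
  induction j generalizing p with
  | zero => simp
  | succ j ih =>
    obtain ⟨hqa, hqb⟩ := hq j j.lt_succ_self
    calc ∫ x in a..b, (derivative^[j + 1] p).eval x * q.eval x
        = (-1) ^ j * ∫ x in a..b, (derivative p).eval x * (derivative^[j] q).eval x := by
          rw [Function.iterate_succ_apply, ih _ fun i hi => hq i (hi.trans j.lt_succ_self)]
      _ = (-1) ^ (j + 1) * ∫ x in a..b, p.eval x * (derivative^[j + 1] q).eval x := by
          simp_rw [mul_comm ((derivative p).eval _)]
          rw [integral_eval_mul_eval_derivative _ _ hqa hqb, Function.iterate_succ_apply']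
          simp_rw [mul_comm ((derivative (derivative^[j] q)).eval _)]
          ring

end IntegrationByParts

theorem integral_one_sub_sq_pow_succ (n : ℕ) :
    (2 * n + 3 : ℝ) * ∫ x in (-1 : ℝ)..1, (1 - x ^ 2) ^ (n + 1) =
      (2 * n + 2) * ∫ x in (-1 : ℝ)..1, (1 - x ^ 2) ^ n := by
  have hparts : ∫ x in (-1 : ℝ)..1, (1 - x ^ 2) ^ (n + 1) =
      ∫ x in (-1 : ℝ)..1, (n + 1 : ℝ) * (1 - x ^ 2) ^ n * (2 * x) * x := by
    have h := integral_eval_mul_eval_derivative (a := -1) (b := 1)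
      ((1 - X ^ 2) ^ (n + 1)) X (by simp) (by simp)
    simpa [derivative_pow] using h
  have hsplit : ∫ x in (-1 : ℝ)..1, (n + 1 : ℝ) * (1 - x ^ 2) ^ n * (2 * x) * x =
      (2 * n + 2 : ℝ) * ((∫ x in (-1 : ℝ)..1, (1 - x ^ 2) ^ n) -
        ∫ x in (-1 : ℝ)..1, (1 - x ^ 2) ^ (n + 1)) := by
    rw [← intervalIntegral.integral_sub (Continuous.intervalIntegrable (by fun_prop) _ _)
      (Continuous.intervalIntegrable (by fun_prop) _ _), ← intervalIntegral.integral_const_mul]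
    congr 1 with x
    ring
  linear_combination hparts + hsplit

theorem integral_one_sub_sq_pow (n : ℕ) :
    ∫ x in (-1 : ℝ)..1, (1 - x ^ 2) ^ n = 2 ^ (2 * n + 1) * (n ! : ℝ) ^ 2 / (2 * n + 1)! := by
  induction n with
  | zero => norm_num
  | succ n ih =>
    have hrec : ∫ x in (-1 : ℝ)..1, (1 - x ^ 2) ^ (n + 1) =
        (2 * n + 2 : ℝ) / (2 * n + 3) * ∫ x in (-1 : ℝ)..1, (1 - x ^ 2) ^ n := by
      rw [div_mul_eq_mul_div, eq_div_iff (by positivity), mul_comm,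
        integral_one_sub_sq_pow_succ]
    have hfac : ((2 * (n + 1) + 1)! : ℝ) = (2 * n + 3) * (2 * n + 2) * (2 * n + 1)! := by
      rw [show 2 * (n + 1) + 1 = 2 * n + 1 + 1 + 1 by ring, factorial_succ, factorial_succ]
      push_cast
      ring
    rw [hrec, ih, hfac, factorial_succ n]
    push_cast
    field_simp
    ring

noncomputable def rodriguesPoly (n : ℕ) : ℝ[X] := (X ^ 2 - 1) ^ n

theorem natDegree_rodriguesPoly (n : ℕ) : (rodriguesPoly n).natDegree = 2 * n := by
  rw [rodriguesPoly, natDegree_pow, ← C_1, natDegree_X_pow_sub_C, mul_comm]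

theorem monic_rodriguesPoly (n : ℕ) : (rodriguesPoly n).Monic :=
  (monic_X_pow_sub_C 1 two_ne_zero).pow n

theorem iterate_derivative_rodriguesPoly_two_mul (n : ℕ) :
    derivative^[2 * n] (rodriguesPoly n) = C ((2 * n)! : ℝ) := by
  simpa [natDegree_rodriguesPoly] using (monic_rodriguesPoly n).iterate_derivative_natDegree

theorem eval_iterate_derivative_rodriguesPoly {n i : ℕ} (hi : i < n) {x : ℝ} (hx : x ^ 2 = 1) :
    (derivative^[i] (rodriguesPoly n)).eval x = 0 :=
  eval_iterate_derivative_pow_eq_zero (by simp [hx]) hi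

theorem legendre_eq_eval (n : ℕ) (x : ℝ) :
    legendre n x = (2 ^ n * n ! : ℝ)⁻¹ * (derivative^[n] (rodriguesPoly n)).eval x := by
  have h : (fun y : ℝ => (y ^ 2 - 1) ^ n) = fun y => (rodriguesPoly n).eval y := by
    simp [rodriguesPoly]
  rw [legendre, h, iteratedDeriv_eval, one_div]

theorem integral_legendre_mul_legendre (n m : ℕ) :
    ∫ x in (-1 : ℝ)..1, legendre n x * legendre m x =
      (2 ^ n * n ! : ℝ)⁻¹ * (2 ^ m * m ! : ℝ)⁻¹ *
        ∫ x in (-1 : ℝ)..1, (derivative^[n] (rodriguesPoly n)).eval x *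
          (derivative^[m] (rodriguesPoly m)).eval x := by
  rw [← intervalIntegral.integral_const_mul]
  congr 1 with x
  rw [legendre_eq_eval, legendre_eq_eval]
  ring

theorem integral_eval_mul_eval_iterate_derivative_rodriguesPoly (p : ℝ[X]) (m : ℕ) :
    ∫ x in (-1 : ℝ)..1, p.eval x * (derivative^[m] (rodriguesPoly m)).eval x =
      (-1) ^ m * ∫ x in (-1 : ℝ)..1, (derivative^[m] p).eval x * (rodriguesPoly m).eval x := by
  have hvanish : ∀ i < m, (derivative^[i] (rodriguesPoly m)).eval (-1) = 0 ∧
      (derivative^[i] (rodriguesPoly m)).eval 1 = 0 := fun i hi =>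
    ⟨eval_iterate_derivative_rodriguesPoly hi (by norm_num),
      eval_iterate_derivative_rodriguesPoly hi (by norm_num)⟩
  rw [integral_eval_iterate_derivative_mul_eval _ _ _ hvanish, ← mul_assoc, ← mul_pow]
  norm_num

theorem integral_iterate_derivative_rodriguesPoly_mul_of_lt {n m : ℕ} (h : n < m) :
    ∫ x in (-1 : ℝ)..1, (derivative^[n] (rodriguesPoly n)).eval x *
      (derivative^[m] (rodriguesPoly m)).eval x = 0 := by
  rw [integral_eval_mul_eval_iterate_derivative_rodriguesPoly, ← Function.iterate_add_apply,
    iterate_derivative_eq_zero (by rw [natDegree_rodriguesPoly]; omega)]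
  simp

theorem integral_iterate_derivative_rodriguesPoly_sq (n : ℕ) :
    ∫ x in (-1 : ℝ)..1, (derivative^[n] (rodriguesPoly n)).eval x *
      (derivative^[n] (rodriguesPoly n)).eval x =
      (2 * n)! * (2 ^ (2 * n + 1) * (n ! : ℝ) ^ 2 / (2 * n + 1)!) := by
  rw [integral_eval_mul_eval_iterate_derivative_rodriguesPoly, ← Function.iterate_add_apply,
    ← two_mul, iterate_derivative_rodriguesPoly_two_mul, ← integral_one_sub_sq_pow,
    ← intervalIntegral.integral_const_mul, ← intervalIntegral.integral_const_mul]
  congr 1 with x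
  simp only [rodriguesPoly, eval_C, eval_pow, eval_sub, eval_X, eval_one]
  rw [mul_left_comm, ← mul_pow, neg_one_mul, neg_sub]

/-- Orthogonality of the Legendre polynomials:
`∫_{-1}^{1} L_n L_m = 2/(2n+1)` if `n = m`, and `0` if `n ≠ m`. -/
theorem statement8 (n m : ℕ) :
    ∫ x in (-1 : ℝ)..1, legendre n x * legendre m x =
      if n = m then 2 / (2 * (n : ℝ) + 1) else 0 := by
  rcases lt_trichotomy n m with h | rfl | h
  · rw [if_neg h.ne, integral_legendre_mul_legendre,
      integral_iterate_derivative_rodriguesPoly_mul_of_lt h, mul_zero]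
  · rw [if_pos rfl, integral_legendre_mul_legendre, integral_iterate_derivative_rodriguesPoly_sq,
      factorial_succ (2 * n)]
    push_cast
    field_simp
    ring
  · rw [if_neg h.ne']
    simp_rw [mul_comm (legendre n _)]
    rw [integral_legendre_mul_legendre, integral_iterate_derivative_rodriguesPoly_mul_of_lt h,
      mul_zero]
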